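/- Let ω = (ω₀, …, ω_{n+1}) be a key sequence and fix i with 1 ≤ i ≤ n. Let (β_{i,0}, …, β_{i,i−1}) be the unique representation tuple of α_i·ω_i, and define μ_i := ∏_{s=1}^{i} α_s − Σ_{j=1}^{i−1} ( ∏_{s=1}^{j−1} α_s )·β_{i,j}. Then μ_i ≥ 1. -/

import Mathlib

/-- `dks ω k` is `gcd(|ω₀|, …, |ω_k|)`. -/
def dks (ω : ℕ → ℤ) (k : ℕ) : ℕ :=
  (Finset.range (k + 1)).gcd fun j => (ω j).natAbs

/-- `alphaK ω k` is `α_k = d_{k−1}/d_k`. -/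
def alphaK (ω : ℕ → ℤ) (k : ℕ) : ℕ := dks ω (k - 1) / dks ω k

/-- A key sequence `(ω₀, …, ω_{n+1})`. -/
def IsKeySequence (n : ℕ) (ω : ℕ → ℤ) : Prop :=
  1 ≤ ω 0 ∧ dks ω (n + 1) = 1 ∧
    ∀ k, 1 ≤ k → k ≤ n → ω (k + 1) < (alphaK ω k : ℤ) * ω k

/-- A key sequence is primitive iff `ω_{n+1} > 0`. -/
def IsPrimitive (n : ℕ) (ω : ℕ → ℤ) : Prop := 0 < ω (n + 1)

/-!
The numbers `P_j := ∏_{s=1}^{j} α_s` are the place values of a mixed-radix numeral with radices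
`α_1, α_2, …`, and the bounds `0 ≤ β_{i,j} < α_j` say that the `β_{i,j}` are digits in it. The
largest numeral with `i - 1` digits is `P_{i-1} - 1`, so `μ_i ≥ P_i - P_{i-1} + 1 ≥ 1`, the last
step because all `α_s ≥ 1` (the gcds `d_k` are positive, as `ω₀ ≠ 0`, and decrease under
divisibility).
-/

open Finset

theorem sum_mixedRadix_le_prod_sub_one (a : ℕ → ℕ) (b : ℕ → ℤ) (m : ℕ)
    (hb : ∀ j ∈ Icc 1 m, b j < a j) :
    ∑ j ∈ Icc 1 m, (∏ s ∈ Icc 1 (j - 1), (a s : ℤ)) * b j ≤ (∏ s ∈ Icc 1 m, (a s : ℤ)) - 1 := by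
  induction m with
  | zero => simp
  | succ m ih =>
    rw [sum_Icc_succ_top (by omega), prod_Icc_succ_top (by omega), Nat.add_sub_cancel]
    have hlower := ih fun j hj => hb j (Icc_subset_Icc_right m.le_succ hj)
    have hdigit : b (m + 1) ≤ a (m + 1) - 1 := by
      have := hb (m + 1) (by simp)
      omega
    have hplace : 0 ≤ ∏ s ∈ Icc 1 m, (a s : ℤ) := by positivity
    nlinarith [mul_le_mul_of_nonneg_left hdigit hplace]

section KeySequence

variable {ω : ℕ → ℤ}

theorem dks_pos (h0 : ω 0 ≠ 0) (k : ℕ) : 0 < dks ω k := by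
  rw [Nat.pos_iff_ne_zero, Ne, dks, Finset.gcd_eq_zero_iff]
  intro h
  exact h0 (Int.natAbs_eq_zero.mp (h 0 (by simp)))

theorem dks_dvd_dks {k l : ℕ} (hkl : k ≤ l) : dks ω l ∣ dks ω k :=
  gcd_mono (range_subset_range.2 (by omega))

theorem alphaK_pos (h0 : ω 0 ≠ 0) (k : ℕ) : 0 < alphaK ω k :=
  Nat.div_pos (Nat.le_of_dvd (dks_pos h0 _) (dks_dvd_dks (Nat.sub_le k 1))) (dks_pos h0 k)

end KeySequence

theorem stmt11_general (n : ℕ) (ω : ℕ → ℤ) (hω : IsKeySequence n ω)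
    (i : ℕ) (β : ℕ → ℤ)
    (hβ : ∀ j, 1 ≤ j → j < i → 0 ≤ β j ∧ β j < (alphaK ω j : ℤ)) :
    1 ≤ (∏ s ∈ Finset.Icc 1 i, (alphaK ω s : ℤ)) -
        ∑ j ∈ Finset.Icc 1 (i - 1),
          (∏ s ∈ Finset.Icc 1 (j - 1), (alphaK ω s : ℤ)) * β j := by
  have hα : ∀ s, 0 < alphaK ω s := alphaK_pos (by linarith [hω.1])
  have hdigits := sum_mixedRadix_le_prod_sub_one (alphaK ω) β (i - 1) fun j hj => by
    obtain ⟨hj1, hji⟩ := mem_Icc.mp hj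
    exact (hβ j hj1 (by omega)).2
  have hplace : (∏ s ∈ Icc 1 (i - 1), (alphaK ω s : ℤ)) ≤ ∏ s ∈ Icc 1 i, (alphaK ω s : ℤ) := by
    exact_mod_cast prod_le_prod_of_subset_of_one_le' (Icc_subset_Icc_right (Nat.sub_le i 1))
      fun s _ _ => hα s
  linarith

/-- For a key sequence `ω` and `1 ≤ i ≤ n`, if `(β_{i,0}, …, β_{i,i−1})` is the unique
representation tuple of `α_i·ω_i`, then
`μ_i := ∏_{s=1}^{i} α_s − Σ_{j=1}^{i−1} (∏_{s=1}^{j−1} α_s)·β_{i,j} ≥ 1`. -/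
theorem stmt11 (n : ℕ) (ω : ℕ → ℤ) (hω : IsKeySequence n ω)
    (i : ℕ) (hi1 : 1 ≤ i) (hin : i ≤ n) (β : ℕ → ℤ)
    (hβ : ∀ j, 1 ≤ j → j < i → 0 ≤ β j ∧ β j < (alphaK ω j : ℤ))
    (hrep : (alphaK ω i : ℤ) * ω i = ∑ j ∈ Finset.range i, β j * ω j) :
    1 ≤ (∏ s ∈ Finset.Icc 1 i, (alphaK ω s : ℤ)) -
        ∑ j ∈ Finset.Icc 1 (i - 1),
          (∏ s ∈ Finset.Icc 1 (j - 1), (alphaK ω s : ℤ)) * β j :=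
  stmt11_general n ω hω i β hβ
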